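/- Normalization and density bounds under the noise assumptions (Lemma 4.3): Assume ρ satisfies (N.1)–(N.3) and that L : X → ℝ^d is Borel measurable with ‖L‖_{L²(μ_prior)} < ∞. There exists a constant C > 0, depending only on ρ (through the constants in (N.2)–(N.3)), such that for every y ∈ ℝ^d: Z(y) ≥ C⁻¹ exp( −|y|_Γ² − ‖L‖²_{L²(μ_prior)} ), and for every ū ∈ X: ρ(y − L(ū))/Z(y) ≤ C exp( |y|_Γ² + ‖L‖²_{L²(μ_prior)} ). -/

import Mathlib

open MeasureTheory
open scoped BigOperators ENNReal Matrix

noncomputable section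

/-- The Γ-weighted norm `|y|_Γ = sqrt ⟨y, Γ⁻¹ y⟩` on `ℝ^d`. -/
def gammaNorm {d : ℕ} (Γ : Matrix (Fin d) (Fin d) ℝ) (y : Fin d → ℝ) : ℝ :=
  Real.sqrt (y ⬝ᵥ (Γ⁻¹).mulVec y)

/-- A noise density satisfying (N.1)–(N.3). -/
structure IsNoiseDensity {d : ℕ} (Γ : Matrix (Fin d) (Fin d) ℝ) (ρ : (Fin d → ℝ) → ℝ)
    (Lρ Cb Ct : ℝ) : Prop where
  Lρ_pos : 0 < Lρ
  Cb_pos : 0 < Cb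
  Ct_pos : 0 < Ct
  pos : ∀ y, 0 < ρ y
  lip : ∀ y y', |ρ y - ρ y'| ≤ Lρ * gammaNorm Γ (y - y')
  bdd : ∀ y, ρ y ≤ Cb
  tail : ∀ y, Ct⁻¹ * Real.exp (-(1 / 2) * (gammaNorm Γ y) ^ 2) ≤ ρ y

/-- Wasserstein-1 distance in Kantorovich–Rubinstein dual form. -/
def W1 {X : Type*} [NormedAddCommGroup X] [MeasurableSpace X] (μ ν : Measure X) : ℝ :=
  sSup {r : ℝ | ∃ Φ : X → ℝ, LipschitzWith 1 Φ ∧ Φ 0 = 0 ∧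
    r = (∫ u, Φ u ∂μ) - ∫ u, Φ u ∂ν}

/-- Normalization constant `Z(y) = ∫ ρ(y − L(ū)) dμ_prior(ū)`. -/
def bayesZ {X : Type*} [MeasurableSpace X] {d : ℕ} (μp : Measure X)
    (ρ : (Fin d → ℝ) → ℝ) (L : X → Fin d → ℝ) (y : Fin d → ℝ) : ℝ :=
  ∫ u, ρ (y - L u) ∂μp

/-- The Bayesian posterior `μ^y = Z(y)⁻¹ ρ(y − L(·)) · μ_prior`. -/
def bayesPosterior {X : Type*} [MeasurableSpace X] {d : ℕ} (μp : Measure X)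
    (ρ : (Fin d → ℝ) → ℝ) (L : X → Fin d → ℝ) (y : Fin d → ℝ) : Measure X :=
  μp.withDensity fun u => ENNReal.ofReal (ρ (y - L u) / bayesZ μp ρ L y)

/-
For `u` fixed, `|y - L u|_Γ² ≤ 2|y|_Γ² + 2|L u|_Γ²`, so the Gaussian tail bound (N.3) gives
`exp(-|y|_Γ² - |L u|_Γ²) ≤ C_t ρ(y - L u)`. Integrating against the prior and applying Jensen's
inequality to the convex function `exp` yields `Z(y) ≥ C_t⁻¹ exp(-|y|_Γ² - ‖L‖²)`; the density
bound follows by combining this with `ρ ≤ C_b` from (N.2).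
-/

section GammaNorm

variable {d : ℕ} {Γ : Matrix (Fin d) (Fin d) ℝ}

lemma gammaNorm_eq_norm (hΓ : (Γ⁻¹).PosSemidef) (z : Fin d → ℝ) :
    gammaNorm Γ z = @norm _ (Γ⁻¹.toSeminormedAddCommGroup hΓ).toNorm z := by
  show Real.sqrt _ = Real.sqrt _
  rw [dotProduct_comm]
  rfl

lemma gammaNorm_sub_le (hΓ : (Γ⁻¹).PosSemidef) (a b : Fin d → ℝ) :
    gammaNorm Γ (a - b) ≤ gammaNorm Γ a + gammaNorm Γ b := by
  rw [gammaNorm_eq_norm hΓ, gammaNorm_eq_norm hΓ, gammaNorm_eq_norm hΓ]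
  exact @norm_sub_le _ (Γ⁻¹.toSeminormedAddCommGroup hΓ).toSeminormedAddGroup a b

lemma gammaNorm_sub_sq_le (hΓ : (Γ⁻¹).PosSemidef) (a b : Fin d → ℝ) :
    gammaNorm Γ (a - b) ^ 2 ≤ 2 * gammaNorm Γ a ^ 2 + 2 * gammaNorm Γ b ^ 2 := by
  have h : gammaNorm Γ (a - b) ^ 2 ≤ (gammaNorm Γ a + gammaNorm Γ b) ^ 2 :=
    pow_le_pow_left₀ (Real.sqrt_nonneg _) (gammaNorm_sub_le hΓ a b) 2
  nlinarith [sq_nonneg (gammaNorm Γ a - gammaNorm Γ b)]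

lemma continuous_gammaNorm : Continuous (gammaNorm Γ) := by
  unfold gammaNorm
  fun_prop

@[simp]
lemma gammaNorm_zero : gammaNorm Γ 0 = 0 := by
  simp [gammaNorm]

lemma continuous_of_abs_sub_le_gammaNorm {f : (Fin d → ℝ) → ℝ} {K : ℝ}
    (hf : ∀ y y', |f y - f y'| ≤ K * gammaNorm Γ (y - y')) : Continuous f := by
  refine continuous_iff_continuousAt.2 fun y₀ => tendsto_iff_norm_sub_tendsto_zero.2 ?_
  have hK : Continuous fun y => K * gammaNorm Γ (y - y₀) :=
    continuous_const.mul (continuous_gammaNorm.comp (continuous_sub_right y₀))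
  refine squeeze_zero (fun _ => norm_nonneg _) (fun y => hf y y₀) ?_
  simpa using hK.tendsto y₀

end GammaNorm

lemma Real.exp_integral_le_integral_exp {Ω : Type*} [MeasurableSpace Ω] {μ : Measure Ω}
    [IsProbabilityMeasure μ] {f : Ω → ℝ} (hf : Integrable f μ)
    (hexp : Integrable (fun ω => Real.exp (f ω)) μ) :
    Real.exp (∫ ω, f ω ∂μ) ≤ ∫ ω, Real.exp (f ω) ∂μ :=
  convexOn_exp.map_integral_le Real.continuous_exp.continuousOn isClosed_univ
    (.of_forall fun _ => Set.mem_univ _) hf hexp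

namespace IsNoiseDensity

variable {X : Type*} [MeasurableSpace X] {d : ℕ} {Γ : Matrix (Fin d) (Fin d) ℝ}
  {ρ : (Fin d → ℝ) → ℝ} {Lρ Cb Ct : ℝ}

lemma continuous (hρ : IsNoiseDensity Γ ρ Lρ Cb Ct) : Continuous ρ :=
  continuous_of_abs_sub_le_gammaNorm hρ.lip

lemma integrable_comp (hρ : IsNoiseDensity Γ ρ Lρ Cb Ct) {μ : Measure X} [IsFiniteMeasure μ]
    {L : X → Fin d → ℝ} (hL : AEMeasurable L μ) (y : Fin d → ℝ) :
    Integrable (fun u => ρ (y - L u)) μ := by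
  have hmeas : AEMeasurable (fun u => ρ (y - L u)) μ :=
    hρ.continuous.measurable.comp_aemeasurable (aemeasurable_const.sub hL)
  refine Integrable.of_bound hmeas.aestronglyMeasurable Cb (.of_forall fun u => ?_)
  rw [Real.norm_eq_abs, abs_of_pos (hρ.pos _)]
  exact hρ.bdd _

lemma exp_neg_le (hρ : IsNoiseDensity Γ ρ Lρ Cb Ct) (hΓ : (Γ⁻¹).PosSemidef) (y z : Fin d → ℝ) :
    Real.exp (-gammaNorm Γ y ^ 2 - gammaNorm Γ z ^ 2) ≤ Ct * ρ (y - z) := by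
  calc Real.exp (-gammaNorm Γ y ^ 2 - gammaNorm Γ z ^ 2)
      ≤ Real.exp (-(1 / 2) * gammaNorm Γ (y - z) ^ 2) := by
        gcongr
        linarith [gammaNorm_sub_sq_le hΓ y z]
    _ = Ct * (Ct⁻¹ * Real.exp (-(1 / 2) * gammaNorm Γ (y - z) ^ 2)) := by
        rw [mul_inv_cancel_left₀ hρ.Ct_pos.ne']
    _ ≤ Ct * ρ (y - z) := by
        gcongr
        · exact hρ.Ct_pos.le
        · exact hρ.tail _

lemma inv_mul_exp_le_bayesZ (hρ : IsNoiseDensity Γ ρ Lρ Cb Ct) (hΓ : (Γ⁻¹).PosSemidef)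
    {μ : Measure X} [IsProbabilityMeasure μ] {L : X → Fin d → ℝ} (hL : AEMeasurable L μ)
    (hL2 : Integrable (fun u => gammaNorm Γ (L u) ^ 2) μ) (y : Fin d → ℝ) :
    Ct⁻¹ * Real.exp (-gammaNorm Γ y ^ 2 - ∫ u, gammaNorm Γ (L u) ^ 2 ∂μ) ≤ bayesZ μ ρ L y := by
  rw [inv_mul_le_iff₀ hρ.Ct_pos]
  have hρL := hρ.integrable_comp hL y
  have hf : Integrable (fun u => -gammaNorm Γ y ^ 2 - gammaNorm Γ (L u) ^ 2) μ :=
    (integrable_const _).sub hL2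
  have hexp : Integrable (fun u => Real.exp (-gammaNorm Γ y ^ 2 - gammaNorm Γ (L u) ^ 2)) μ := by
    refine (hρL.const_mul Ct).mono' (Real.continuous_exp.comp_aestronglyMeasurable
      hf.aestronglyMeasurable) (.of_forall fun u => ?_)
    rw [Real.norm_eq_abs, abs_of_pos (Real.exp_pos _)]
    exact hρ.exp_neg_le hΓ y (L u)
  calc Real.exp (-gammaNorm Γ y ^ 2 - ∫ u, gammaNorm Γ (L u) ^ 2 ∂μ)
      = Real.exp (∫ u, (-gammaNorm Γ y ^ 2 - gammaNorm Γ (L u) ^ 2) ∂μ) := by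
        rw [integral_sub (integrable_const _) hL2, integral_const, probReal_univ, one_smul]
    _ ≤ ∫ u, Real.exp (-gammaNorm Γ y ^ 2 - gammaNorm Γ (L u) ^ 2) ∂μ :=
        Real.exp_integral_le_integral_exp hf hexp
    _ ≤ ∫ u, Ct * ρ (y - L u) ∂μ :=
        integral_mono hexp (hρL.const_mul Ct) fun u => hρ.exp_neg_le hΓ y (L u)
    _ = Ct * bayesZ μ ρ L y := integral_const_mul _ _

lemma div_bayesZ_le (hρ : IsNoiseDensity Γ ρ Lρ Cb Ct) (hΓ : (Γ⁻¹).PosSemidef)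
    {μ : Measure X} [IsProbabilityMeasure μ] {L : X → Fin d → ℝ} (hL : AEMeasurable L μ)
    (hL2 : Integrable (fun u => gammaNorm Γ (L u) ^ 2) μ) (y : Fin d → ℝ) (u : X) :
    ρ (y - L u) / bayesZ μ ρ L y
      ≤ Cb * Ct * Real.exp (gammaNorm Γ y ^ 2 + ∫ v, gammaNorm Γ (L v) ^ 2 ∂μ) := by
  have hZ := hρ.inv_mul_exp_le_bayesZ hΓ hL hL2 y
  have hZpos : 0 < bayesZ μ ρ L y := lt_of_lt_of_le (by have := hρ.Ct_pos; positivity) hZ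
  rw [div_le_iff₀ hZpos]
  calc ρ (y - L u) ≤ Cb := hρ.bdd _
    _ = Cb * Ct * Real.exp (gammaNorm Γ y ^ 2 + ∫ v, gammaNorm Γ (L v) ^ 2 ∂μ)
          * (Ct⁻¹ * Real.exp (-gammaNorm Γ y ^ 2 - ∫ v, gammaNorm Γ (L v) ^ 2 ∂μ)) := by
        rw [← neg_add', Real.exp_neg]
        field_simp [hρ.Ct_pos.ne']
    _ ≤ _ := by
        gcongr
        exact mul_nonneg (mul_nonneg hρ.Cb_pos.le hρ.Ct_pos.le) (Real.exp_pos _).le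

end IsNoiseDensity

theorem normalization_and_density_bounds_general
    {X : Type*} [MeasurableSpace X]
    {d : ℕ}
    (Γ : Matrix (Fin d) (Fin d) ℝ) (hΓ : Γ.PosDef)
    (ρ : (Fin d → ℝ) → ℝ) (Lρ Cb Ct : ℝ) (hρ : IsNoiseDensity Γ ρ Lρ Cb Ct) :
    ∃ C > 0, ∀ μp : Measure X, IsProbabilityMeasure μp →
      ∀ L : X → Fin d → ℝ, Measurable L →
        Integrable (fun u => (gammaNorm Γ (L u)) ^ 2) μp →
      ∀ y : Fin d → ℝ,
        C⁻¹ * Real.exp (-(gammaNorm Γ y) ^ 2 - ∫ u, (gammaNorm Γ (L u)) ^ 2 ∂μp)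
            ≤ bayesZ μp ρ L y ∧
        ∀ u : X,
          ρ (y - L u) / bayesZ μp ρ L y
            ≤ C * Real.exp ((gammaNorm Γ y) ^ 2 + ∫ v, (gammaNorm Γ (L v)) ^ 2 ∂μp) := by
  have hCt := hρ.Ct_pos
  have hΓinv : (Γ⁻¹).PosSemidef := hΓ.inv.posSemidef
  refine ⟨Ct * max Cb 1, by positivity, fun μp _ L hL hL2 y => ⟨?_, fun u => ?_⟩⟩
  · calc (Ct * max Cb 1)⁻¹ * Real.exp (-gammaNorm Γ y ^ 2 - ∫ u, gammaNorm Γ (L u) ^ 2 ∂μp)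
        ≤ Ct⁻¹ * Real.exp (-gammaNorm Γ y ^ 2 - ∫ u, gammaNorm Γ (L u) ^ 2 ∂μp) := by
          gcongr
          exact le_mul_of_one_le_right hCt.le (le_max_right _ _)
      _ ≤ bayesZ μp ρ L y := hρ.inv_mul_exp_le_bayesZ hΓinv hL.aemeasurable hL2 y
  · calc ρ (y - L u) / bayesZ μp ρ L y
        ≤ Cb * Ct * Real.exp (gammaNorm Γ y ^ 2 + ∫ v, gammaNorm Γ (L v) ^ 2 ∂μp) :=
          hρ.div_bayesZ_le hΓinv hL.aemeasurable hL2 y u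
      _ ≤ Ct * max Cb 1 * Real.exp (gammaNorm Γ y ^ 2 + ∫ v, gammaNorm Γ (L v) ^ 2 ∂μp) := by
          rw [mul_comm Cb]
          gcongr
          exact le_max_left _ _

/-- **Lemma 4.3: lower bound on the normalization constant `Z(y)` and upper
bound on the posterior density, with a constant depending only on the noise
density `ρ`.** -/
theorem normalization_and_density_bounds
    {X : Type*} [NormedAddCommGroup X] [NormedSpace ℝ X] [CompleteSpace X]
    [TopologicalSpace.SeparableSpace X] [MeasurableSpace X] [BorelSpace X]
    {d : ℕ}
    (Γ : Matrix (Fin d) (Fin d) ℝ) (hΓ : Γ.PosDef)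
    (ρ : (Fin d → ℝ) → ℝ) (Lρ Cb Ct : ℝ) (hρ : IsNoiseDensity Γ ρ Lρ Cb Ct) :
    ∃ C > 0, ∀ μp : Measure X, IsProbabilityMeasure μp →
      ∀ L : X → Fin d → ℝ, Measurable L →
        Integrable (fun u => (gammaNorm Γ (L u)) ^ 2) μp →
      ∀ y : Fin d → ℝ,
        C⁻¹ * Real.exp (-(gammaNorm Γ y) ^ 2 - ∫ u, (gammaNorm Γ (L u)) ^ 2 ∂μp)
            ≤ bayesZ μp ρ L y ∧
        ∀ u : X,
          ρ (y - L u) / bayesZ μp ρ L y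
            ≤ C * Real.exp ((gammaNorm Γ y) ^ 2 + ∫ v, (gammaNorm Γ (L v)) ^ 2 ∂μp) :=
  normalization_and_density_bounds_general Γ hΓ ρ Lρ Cb Ct hρ
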